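/- arXiv:1003.4240 — 4 statements merged into one kernel-verified Lean document; each statement's English description precedes it below -/
import Mathlib

section
/- Let F_q be a finite field of odd characteristic, d ≥ 2 with d less than the characteristic, and a₁, a₂ ∈ F_q \ {0}. For t ∈ F_q let V_t = {x ∈ F_q² : a₁x₁^d + a₂x₂^d = t} and define V̂_t(m) = q^{-2} ∑_{x ∈ F_q²} χ(-x·m)·1_{V_t}(x) for a nontrivial additive character χ. Then for every m ∈ F_q² \ {(0,0)}, |∑_{t ∈ F_q} V̂_t(m)·|V_t|| ≤ C with C independent of q. -/
/-!
Write `W_a,b(s) = ∑ₓ χ(s a x^d + b x)` and `G(c) = ∑ₓ χ(c x^d)`. Orthogonality of `χ` turns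
`∑_t (∑_{x ∈ V_t} χ(-x·m)) |V_t|` into `q⁻¹ ∑ₛ W_{a₁,-m₁}(s) W_{a₂,-m₂}(s) G(-s a₁) G(-s a₂)`,
whose `s = 0` term vanishes because `m ≠ 0`. Orthogonality also gives the second moment
`∑ₛ |W_a,b(s)|² ≤ d q²`, since `x^d = y^d` has at most `d` solutions `x` for each `y`.
As `G` is constant on the orbit `c·(F^×)^d`, which has at least `(q - 1)/d` elements, the second
moment yields `|G(c)|² ≤ 2 d² q` for `c ≠ 0`; no Weil bound is needed. With Cauchy–Schwarz on
`∑ₛ |W W|`, the whole sum is at most `q⁻³ · d q² · 2 d² q = 2 d³`.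
-/

open Finset

lemma sum_comp_le_mul_sum_of_card_fiber_le {α β : Type*} [Fintype α] [Fintype β] [DecidableEq β]
    {f : β → ℝ} (hf : ∀ b, 0 ≤ f b) {g : α → β} {n : ℕ}
    (hg : ∀ b, Fintype.card {a // g a = b} ≤ n) : ∑ a, f (g a) ≤ n * ∑ b, f b := by
  rw [← Fintype.sum_fiberwise' g f, mul_sum]
  gcongr with b
  rw [sum_const, card_univ, nsmul_eq_mul]
  exact mul_le_mul_of_nonneg_right (mod_cast hg b) (hf b)

section PowerCharacterSums

variable {F : Type} [Field F] [Fintype F]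

lemma card_filter_pow_eq_le [DecidableEq F] {d : ℕ} (hd : d ≠ 0) (c : F) :
    #{x : F | x ^ d = c} ≤ d :=
  calc #{x : F | x ^ d = c} ≤ (Polynomial.nthRoots d c).toFinset.card :=
        card_le_card fun x hx => by
          simpa [Polynomial.mem_nthRoots (Nat.pos_of_ne_zero hd)] using hx
    _ ≤ Multiset.card (Polynomial.nthRoots d c) := Multiset.toFinset_card_le _
    _ ≤ d := Polynomial.card_nthRoots d c

variable (χ : AddChar F ℂ) (d : ℕ)

def powCharSum (a b : F) : ℂ := ∑ x, χ (a * x ^ d + b * x)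

variable {χ d}

lemma powCharSum_zero_left [DecidableEq F] (hχ : χ ≠ 1) {b : F} (hb : b ≠ 0) :
    powCharSum χ d 0 b = 0 := by
  simp only [powCharSum, zero_mul, zero_add, mul_comm b]
  rw [AddChar.sum_mulShift b (.of_ne_one hχ), if_neg hb, Nat.cast_zero]

lemma powCharSum_mul_pow {l : F} (hl : l ≠ 0) (a : F) :
    powCharSum χ d (a * l ^ d) 0 = powCharSum χ d a 0 :=
  Fintype.sum_bijective (l * ·) (mulLeft_bijective₀ l hl) _ _ fun x => by ring_nf

lemma sum_prod_eq_powCharSum_mul (a₁ b₁ a₂ b₂ : F) :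
    ∑ x : F × F, χ (a₁ * x.1 ^ d + b₁ * x.1 + (a₂ * x.2 ^ d + b₂ * x.2)) =
      powCharSum χ d a₁ b₁ * powCharSum χ d a₂ b₂ := by
  simp only [Fintype.sum_prod_type, AddChar.map_add_eq_mul, powCharSum, sum_mul_sum]

lemma ofReal_sum_norm_sq_powCharSum [DecidableEq F] (hχ : χ ≠ 1) {a : F} (ha : a ≠ 0) (b : F) :
    ((∑ s, ‖powCharSum χ d (s * a) b‖ ^ 2 : ℝ) : ℂ) =
      Fintype.card F * ∑ x, ∑ y, if y ^ d = x ^ d then χ (b * (x - y)) else 0 := by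
  push_cast
  simp_rw [← Complex.mul_conj', powCharSum, map_sum, ← AddChar.map_neg_eq_conj, sum_mul_sum,
    ← AddChar.map_add_eq_mul]
  rw [sum_comm, mul_sum]
  refine sum_congr rfl fun x _ => ?_
  rw [sum_comm, mul_sum]
  refine sum_congr rfl fun y _ => ?_
  have hsplit : ∀ s, χ (s * a * x ^ d + b * x + -(s * a * y ^ d + b * y)) =
      χ (s * (a * (x ^ d - y ^ d))) * χ (b * (x - y)) := fun s => by
    rw [← AddChar.map_add_eq_mul]; ring_nf
  simp_rw [hsplit, ← sum_mul, AddChar.sum_mulShift _ (.of_ne_one hχ), mul_eq_zero, sub_eq_zero,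
    ha, false_or, eq_comm (a := x ^ d)]
  split_ifs <;> simp

lemma sum_norm_sq_powCharSum_le [DecidableEq F] (hd : d ≠ 0) (hχ : χ ≠ 1) {a : F} (ha : a ≠ 0)
    (b : F) : ∑ s, ‖powCharSum χ d (s * a) b‖ ^ 2 ≤ d * (Fintype.card F : ℝ) ^ 2 := by
  have hrow : ∀ x : F, ‖∑ y, if y ^ d = x ^ d then χ (b * (x - y)) else 0‖ ≤ d := fun x => by
    rw [← sum_filter]
    refine (norm_sum_le _ _).trans ?_
    simp only [AddChar.norm_apply, sum_const, nsmul_eq_mul, mul_one]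
    exact_mod_cast card_filter_pow_eq_le (F := F) hd _
  calc ∑ s, ‖powCharSum χ d (s * a) b‖ ^ 2
      = ‖((∑ s, ‖powCharSum χ d (s * a) b‖ ^ 2 : ℝ) : ℂ)‖ := by
        rw [Complex.norm_real, Real.norm_of_nonneg (by positivity)]
    _ = Fintype.card F * ‖∑ x, ∑ y, if y ^ d = x ^ d then χ (b * (x - y)) else 0‖ := by
        rw [ofReal_sum_norm_sq_powCharSum hχ ha, norm_mul, Complex.norm_natCast]
    _ ≤ Fintype.card F * ∑ _x : F, (d : ℝ) := by
        gcongr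
        exact (norm_sum_le _ _).trans (sum_le_sum fun x _ => hrow x)
    _ = d * (Fintype.card F : ℝ) ^ 2 := by
        rw [sum_const, card_univ, nsmul_eq_mul]; ring

lemma norm_sq_powCharSum_le [DecidableEq F] (hd : d ≠ 0) (hχ : χ ≠ 1) {c : F} (hc : c ≠ 0) :
    ‖powCharSum χ d c 0‖ ^ 2 ≤ 2 * d ^ 2 * Fintype.card F := by
  set q := Fintype.card F
  set G : F → ℝ := fun u => ‖powCharSum χ d u 0‖ ^ 2 with hG
  have horbit : (q - 1 : ℝ) * G c ≤ ∑ l, G (c * l ^ d) := calc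
    (q - 1 : ℝ) * G c = ∑ l ∈ univ.erase 0, G (c * l ^ d) := by
      rw [sum_congr rfl fun l hl => show G (c * l ^ d) = G c by
          simp only [hG, powCharSum_mul_pow (ne_of_mem_erase hl)],
        sum_const, card_erase_of_mem (mem_univ _), card_univ, nsmul_eq_mul,
        Nat.cast_sub Fintype.card_pos, Nat.cast_one]
    _ ≤ ∑ l, G (c * l ^ d) :=
      sum_le_sum_of_subset_of_nonneg (subset_univ _) fun _ _ _ => sq_nonneg _
  have hfiber : ∑ l, G (c * l ^ d) ≤ d * ∑ u, G u :=
    sum_comp_le_mul_sum_of_card_fiber_le (f := G) (g := (c * · ^ d)) (fun _ => sq_nonneg _)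
      fun u => by
        rw [Fintype.card_subtype]
        refine (card_le_card fun l hl => ?_).trans (card_filter_pow_eq_le hd (c⁻¹ * u))
        simp only [mem_filter, mem_univ, true_and] at hl ⊢
        rw [← hl, inv_mul_cancel_left₀ hc]
  have hmoment : ∑ u, G u ≤ d * q ^ 2 := by
    simpa [hG] using sum_norm_sq_powCharSum_le hd hχ one_ne_zero 0
  have hq : (2 : ℝ) ≤ q := mod_cast Fintype.one_lt_card
  have hGc : 0 ≤ G c := sq_nonneg _
  have hbound : (q - 1 : ℝ) * G c ≤ d ^ 2 * q ^ 2 := by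
    nlinarith [horbit.trans hfiber, mul_le_mul_of_nonneg_left hmoment (Nat.cast_nonneg d)]
  nlinarith

end PowerCharacterSums

section Orthogonality

variable {F : Type} [Field F] [Fintype F] [DecidableEq F] {χ : AddChar F ℂ}

lemma natCard_fiber_eq (hχ : χ ≠ 1) {α : Type*} [Fintype α] (P : α → F) (u : F) :
    (Nat.card {y // P y = u} : ℂ) = (Fintype.card F : ℂ)⁻¹ * ∑ y, ∑ s, χ (s * (u - P y)) := by
  simp_rw [AddChar.sum_mulShift _ (.of_ne_one hχ), sub_eq_zero, eq_comm (a := u), Nat.cast_ite,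
    Nat.cast_zero]
  rw [sum_ite, sum_const_zero, add_zero, sum_const, nsmul_eq_mul, Nat.card_eq_fintype_card,
    Fintype.card_subtype]
  field_simp

lemma sum_fiber_sum_mul_natCard_fiber (hχ : χ ≠ 1) {α : Type*} [Fintype α] (P : α → F)
    (c : α → ℂ) :
    ∑ t, (∑ x, if P x = t then c x else 0) * (Nat.card {y // P y = t} : ℂ) =
      (Fintype.card F : ℂ)⁻¹ * ∑ s, (∑ x, χ (s * P x) * c x) * ∑ y, χ (-(s * P y)) := by
  have hfiber : ∑ t, (∑ x, if P x = t then c x else 0) * (Nat.card {y // P y = t} : ℂ) =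
      ∑ x, c x * Nat.card {y // P y = P x} := by
    simp_rw [sum_mul, ite_mul, zero_mul]
    rw [sum_comm]
    simp_rw [sum_ite_eq, mem_univ, if_true]
  simp_rw [hfiber, natCard_fiber_eq hχ, mul_left_comm (c _), ← mul_sum]
  congr 1
  simp_rw [mul_sub, sub_eq_add_neg, AddChar.map_add_eq_mul, mul_sum, sum_mul]
  conv_lhs => rw [sum_comm]
  conv_rhs => rw [sum_comm]; enter [2, y]; rw [sum_comm]
  exact sum_congr rfl fun y _ => sum_congr rfl fun x _ => sum_congr rfl fun s _ => by ring

end Orthogonality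

section DiagonalForm

variable {F : Type} [Field F] [Fintype F] [DecidableEq F] {χ : AddChar F ℂ} {d : ℕ}

lemma sum_fiber_diagonal_mul_natCard_fiber (hχ : χ ≠ 1) (a₁ a₂ : F) (m : F × F) :
    ∑ t : F, (∑ x : F × F, if a₁ * x.1 ^ d + a₂ * x.2 ^ d = t
          then χ (-(x.1 * m.1 + x.2 * m.2)) else 0) *
        (Nat.card {x : F × F // a₁ * x.1 ^ d + a₂ * x.2 ^ d = t} : ℂ) =
      (Fintype.card F : ℂ)⁻¹ * ∑ s, powCharSum χ d (s * a₁) (-m.1) *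
        powCharSum χ d (s * a₂) (-m.2) *
          (powCharSum χ d (-(s * a₁)) 0 * powCharSum χ d (-(s * a₂)) 0) := by
  refine (sum_fiber_sum_mul_natCard_fiber hχ (fun x : F × F => a₁ * x.1 ^ d + a₂ * x.2 ^ d)
    fun x => χ (-(x.1 * m.1 + x.2 * m.2))).trans ?_
  congr 1
  refine sum_congr rfl fun s _ => ?_
  rw [← sum_prod_eq_powCharSum_mul, ← sum_prod_eq_powCharSum_mul]
  congr 1 <;> refine sum_congr rfl fun x _ => ?_
  · rw [← AddChar.map_add_eq_mul]; ring_nf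
  · ring_nf

lemma norm_powCharSum_mul_powCharSum_le (hd : d ≠ 0) (hχ : χ ≠ 1) {c₁ c₂ : F} (hc₁ : c₁ ≠ 0)
    (hc₂ : c₂ ≠ 0) :
    ‖powCharSum χ d c₁ 0 * powCharSum χ d c₂ 0‖ ≤ 2 * d ^ 2 * Fintype.card F := by
  have h₁ := Real.abs_le_sqrt (norm_sq_powCharSum_le hd hχ hc₁)
  have h₂ := Real.abs_le_sqrt (norm_sq_powCharSum_le hd hχ hc₂)
  rw [abs_norm] at h₁ h₂
  rw [norm_mul, ← Real.mul_self_sqrt (by positivity : (0 : ℝ) ≤ 2 * d ^ 2 * Fintype.card F)]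
  exact mul_le_mul h₁ h₂ (norm_nonneg _) (Real.sqrt_nonneg _)

lemma sum_norm_powCharSum_mul_le (hd : d ≠ 0) (hχ : χ ≠ 1) {a₁ a₂ : F} (ha₁ : a₁ ≠ 0)
    (ha₂ : a₂ ≠ 0) (b₁ b₂ : F) :
    ∑ s, ‖powCharSum χ d (s * a₁) b₁‖ * ‖powCharSum χ d (s * a₂) b₂‖ ≤
      d * (Fintype.card F : ℝ) ^ 2 :=
  calc _ ≤ √(∑ s, ‖powCharSum χ d (s * a₁) b₁‖ ^ 2) * √(∑ s, ‖powCharSum χ d (s * a₂) b₂‖ ^ 2) :=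
        Real.sum_mul_le_sqrt_mul_sqrt _ _ _
    _ ≤ √(d * (Fintype.card F : ℝ) ^ 2) * √(d * (Fintype.card F : ℝ) ^ 2) := by
        gcongr
        · exact sum_norm_sq_powCharSum_le hd hχ ha₁ b₁
        · exact sum_norm_sq_powCharSum_le hd hχ ha₂ b₂
    _ = d * (Fintype.card F : ℝ) ^ 2 := Real.mul_self_sqrt (by positivity)

lemma norm_sum_powCharSum_diagonal_le (hd : d ≠ 0) (hχ : χ ≠ 1) {a₁ a₂ : F} (ha₁ : a₁ ≠ 0)
    (ha₂ : a₂ ≠ 0) {m : F × F} (hm : m ≠ (0, 0)) :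
    ‖∑ s, powCharSum χ d (s * a₁) (-m.1) * powCharSum χ d (s * a₂) (-m.2) *
        (powCharSum χ d (-(s * a₁)) 0 * powCharSum χ d (-(s * a₂)) 0)‖ ≤
      2 * d ^ 3 * (Fintype.card F : ℝ) ^ 3 := by
  set K : ℝ := 2 * d ^ 2 * Fintype.card F
  have hterm : ∀ s, ‖powCharSum χ d (s * a₁) (-m.1) * powCharSum χ d (s * a₂) (-m.2) *
        (powCharSum χ d (-(s * a₁)) 0 * powCharSum χ d (-(s * a₂)) 0)‖ ≤
      ‖powCharSum χ d (s * a₁) (-m.1)‖ * ‖powCharSum χ d (s * a₂) (-m.2)‖ * K := by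
    intro s
    rcases eq_or_ne s 0 with rfl | hs
    · have hvanish : powCharSum χ d (0 * a₁) (-m.1) * powCharSum χ d (0 * a₂) (-m.2) = 0 := by
        obtain h | h : m.1 ≠ 0 ∨ m.2 ≠ 0 := by
          contrapose! hm
          exact Prod.ext hm.1 hm.2
        · rw [zero_mul, powCharSum_zero_left hχ (neg_ne_zero.2 h), zero_mul]
        · rw [zero_mul, zero_mul, powCharSum_zero_left hχ (neg_ne_zero.2 h), mul_zero]
      rw [hvanish, zero_mul, norm_zero]
      positivity
    · rw [norm_mul, norm_mul]
      gcongr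
      exact norm_powCharSum_mul_powCharSum_le hd hχ (neg_ne_zero.2 (mul_ne_zero hs ha₁))
        (neg_ne_zero.2 (mul_ne_zero hs ha₂))
  calc _ ≤ ∑ s, ‖powCharSum χ d (s * a₁) (-m.1)‖ * ‖powCharSum χ d (s * a₂) (-m.2)‖ * K :=
        (norm_sum_le _ _).trans (sum_le_sum fun s _ => hterm s)
    _ ≤ d * (Fintype.card F : ℝ) ^ 2 * K := by
        rw [← sum_mul]
        gcongr
        exact sum_norm_powCharSum_mul_le hd hχ ha₁ ha₂ _ _
    _ = 2 * d ^ 3 * (Fintype.card F : ℝ) ^ 3 := by ring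

end DiagonalForm

/-- For `P(x) = a₁x₁^d + a₂x₂^d` with `2 ≤ d` less than the (odd) characteristic and
`a₁, a₂ ≠ 0`, the sum `∑_t V̂_t(m)·|V_t|` is bounded by a constant independent of `q`,
for every `m ≠ (0,0)`. -/
theorem diagonal_curve_fourier_sum_bound (d : ℕ) (hd : 2 ≤ d) :
    ∃ C : ℝ, ∀ (F : Type) [Field F] [Fintype F] [DecidableEq F],
      Odd (ringChar F) → d < ringChar F →
      ∀ a₁ a₂ : F, a₁ ≠ 0 → a₂ ≠ 0 →
      ∀ χ : AddChar F ℂ, χ ≠ 1 →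
      ∀ m : F × F, m ≠ (0, 0) →
        ‖∑ t : F,
            (((Fintype.card F : ℂ) ^ 2)⁻¹ *
              ∑ x : F × F,
                if a₁ * x.1 ^ d + a₂ * x.2 ^ d = t then χ (-(x.1 * m.1 + x.2 * m.2)) else 0) *
            (Nat.card {x : F × F // a₁ * x.1 ^ d + a₂ * x.2 ^ d = t} : ℂ)‖ ≤ C := by
  refine ⟨2 * d ^ 3, fun F _ _ _ _ _ a₁ a₂ ha₁ ha₂ χ hχ m hm => ?_⟩
  simp_rw [mul_assoc, ← mul_sum]
  rw [sum_fiber_diagonal_mul_natCard_fiber hχ, norm_mul, norm_mul, norm_inv, norm_inv, norm_pow,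
    Complex.norm_natCast]
  calc _ ≤ ((Fintype.card F : ℝ) ^ 2)⁻¹ *
        ((Fintype.card F : ℝ)⁻¹ * (2 * d ^ 3 * (Fintype.card F : ℝ) ^ 3)) := by
        gcongr
        exact norm_sum_powCharSum_diagonal_le (by omega) hχ ha₁ ha₂ hm
    _ = 2 * d ^ 3 := by field_simp
end

section
/- Let q be an odd prime power with q ≡ 1 (mod 4), χ a canonical additive character of F_q, and for t ∈ F_q let V_t = {x ∈ F_q² : x₁² + x₂² = t}. Then for every m ∈ F_q², V̂_t(m) = q^{-1}δ₀(m) + q^{-2} ∑_{s ∈ F_q \ {0}} χ( (m₁²+m₂²)/(4s) + st ), where V̂_t(m) = q^{-2} ∑_{x ∈ F_q²} χ(-m·x) 1_{V_t}(x) and δ₀(m) = 1 if m = (0,0) and 0 otherwise. -/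
/-!
Writing `1_{V_t}(x) = q⁻¹ ∑_s χ(s (t - x₁² - x₂²))` and exchanging sums, `q² V̂_t(m)` becomes
`q⁻¹ ∑_s χ(s t) S(-s, m₁) S(-s, m₂)` with `S(c, b) = ∑_y χ(c y² - b y)`. The term `s = 0`
gives `q δ₀(m)`. For `c ≠ 0`, completing the square gives `S(c, b) = χ(-b²/(4c)) η(c) G` with
`η` the quadratic character and `G` its Gauss sum, so the product of the two factors is
`χ(‖m‖/(4s)) G²`, and `G² = η(-1) q = q` because `q ≡ 1 (mod 4)`.
-/

open Finset AddChar MulChar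

lemma ringChar_ne_two_of_card_mod_four_eq_one {F : Type*} [Field F] [Fintype F]
    (hq : Fintype.card F % 4 = 1) : ringChar F ≠ 2 := fun h ↦ by
  have := FiniteField.even_card_iff_char_two.mp h
  omega

noncomputable abbrev quadraticCharIn (F R : Type*) [Field F] [Fintype F] [DecidableEq F]
    [CommRing R] : MulChar F R :=
  (quadraticChar F).ringHomComp (Int.castRingHom R)

section

variable {F R : Type*} [Field F] [Fintype F] [DecidableEq F] [CommRing R] [IsDomain R]
  {ψ : AddChar F R}

local notation "η" => quadraticCharIn F R

lemma sum_addChar_mul_sq (hF : ringChar F ≠ 2) (hψ : ψ.IsPrimitive) {c : F} (hc : c ≠ 0) :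
    ∑ y, ψ (c * y ^ 2) = η c * gaussSum η ψ := by
  have hcard (a : F) : (#{y : F | y ^ 2 = a} : R) = η a + 1 := by
    have h := congrArg (Int.cast : ℤ → R) (quadraticChar_card_sqrts hF a)
    simpa [Set.toFinset_ofPred] using h
  calc ∑ y, ψ (c * y ^ 2)
      = ∑ a, (#{y : F | y ^ 2 = a} : R) * ψ (c * a) := by
        rw [← sum_fiberwise univ (· ^ 2) fun y ↦ ψ (c * y ^ 2)]
        refine sum_congr rfl fun a _ ↦ ?_
        rw [sum_congr rfl fun y hy ↦ by rw [(mem_filter.mp hy).2], sum_const, nsmul_eq_mul]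
    _ = gaussSum η (ψ.mulShift c) + ∑ a, ψ (a * c) := by
        simp only [hcard, add_mul, one_mul, sum_add_distrib, gaussSum, mulShift_apply, mul_comm c]
    _ = η c * gaussSum η ψ := by
        rw [sum_mulShift c hψ, if_neg hc, Nat.cast_zero, add_zero,
          ← Units.val_mk0 hc, gaussSum_mulShift_eq, ((quadraticChar_isQuadratic F).comp _).inv]

lemma sum_addChar_mul_sq_sub_mul (hF : ringChar F ≠ 2) (hψ : ψ.IsPrimitive) {c : F} (hc : c ≠ 0)
    (b : F) :
    ∑ x, ψ (c * x ^ 2 - b * x) = ψ (-(b ^ 2 / (4 * c))) * (η c * gaussSum η ψ) := by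
  have h2 : (2 : F) ≠ 0 := Ring.two_ne_zero hF
  have h4 : (4 : F) ≠ 0 := by
    simpa [show (4 : F) = 2 * 2 by norm_num] using mul_ne_zero h2 h2
  have hsquare (y : F) : c * (y + b / (2 * c)) ^ 2 - b * (y + b / (2 * c))
      = c * y ^ 2 + -(b ^ 2 / (4 * c)) := by
    field_simp
    ring
  calc ∑ x, ψ (c * x ^ 2 - b * x)
      = ∑ y, ψ (c * (y + b / (2 * c)) ^ 2 - b * (y + b / (2 * c))) :=
        (Fintype.sum_equiv (Equiv.addRight (b / (2 * c))) _ _ fun _ ↦ rfl).symm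
    _ = ψ (-(b ^ 2 / (4 * c))) * (η c * gaussSum η ψ) := by
        simp_rw [hsquare, map_add_eq_mul, ← sum_mul, sum_addChar_mul_sq hF hψ hc, mul_comm]

lemma gaussSum_quadraticCharIn_sq_of_card_mod_four_eq_one (hq : Fintype.card F % 4 = 1)
    (hR : ringChar R ≠ 2) (hψ : ψ.IsPrimitive) :
    gaussSum η ψ ^ 2 = Fintype.card F := by
  have hF := ringChar_ne_two_of_card_mod_four_eq_one hq
  have hη : η ≠ 1 := by
    obtain ⟨a, ha⟩ := quadraticChar_exists_neg_one' hF
    refine ne_one_iff.mpr ⟨a, ?_⟩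
    simpa [ha] using Ring.neg_one_ne_one_of_char_ne_two hR
  rw [gaussSum_sq hη ((quadraticChar_isQuadratic F).comp _) hψ, ringHomComp_apply,
    quadraticChar_neg_one hF, ZMod.χ₄_nat_one_mod_four hq, map_one, one_mul]

lemma card_mul_sum_circle_eq_sum_mul_sum (hψ : ψ.IsPrimitive) (t : F) (m : F × F) :
    (Fintype.card F : R) *
        ∑ x : F × F, (if x.1 ^ 2 + x.2 ^ 2 = t then ψ (-(m.1 * x.1 + m.2 * x.2)) else 0)
      = ∑ s, (∑ y, ψ (-s * y ^ 2 - m.1 * y)) * (∑ y, ψ (-s * y ^ 2 - m.2 * y)) * ψ (s * t) := by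
  have hdelta (x : F × F) :
      (Fintype.card F : R) * (if x.1 ^ 2 + x.2 ^ 2 = t then ψ (-(m.1 * x.1 + m.2 * x.2)) else 0)
        = ∑ s, ψ (s * (t - (x.1 ^ 2 + x.2 ^ 2))) * ψ (-(m.1 * x.1 + m.2 * x.2)) := by
    rw [← sum_mul, sum_mulShift _ hψ]
    simp only [sub_eq_zero, eq_comm (a := t)]
    split_ifs <;> simp
  calc _ = ∑ x : F × F, ∑ s,
          ψ (s * (t - (x.1 ^ 2 + x.2 ^ 2))) * ψ (-(m.1 * x.1 + m.2 * x.2)) := by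
        rw [mul_sum]
        exact sum_congr rfl fun x _ ↦ hdelta x
    _ = ∑ s, ∑ x : F × F,
          ψ (-s * x.1 ^ 2 - m.1 * x.1) * ψ (-s * x.2 ^ 2 - m.2 * x.2) * ψ (s * t) := by
        rw [sum_comm]
        refine sum_congr rfl fun s _ ↦ sum_congr rfl fun x _ ↦ ?_
        simp_rw [← map_add_eq_mul]
        congr 1
        ring
    _ = _ := by simp_rw [Fintype.sum_prod_type, sum_mul_sum, sum_mul]

lemma card_mul_sum_circle_eq (hq : Fintype.card F % 4 = 1) (hR : ringChar R ≠ 2)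
    (hψ : ψ.IsPrimitive) (t : F) (m : F × F) :
    (Fintype.card F : R) *
        ∑ x : F × F, (if x.1 ^ 2 + x.2 ^ 2 = t then ψ (-(m.1 * x.1 + m.2 * x.2)) else 0)
      = Fintype.card F ^ 2 * (if m = (0, 0) then 1 else 0) +
        Fintype.card F * ∑ s ∈ univ \ {(0 : F)}, ψ ((m.1 ^ 2 + m.2 ^ 2) / (4 * s) + s * t) := by
  have hF := ringChar_ne_two_of_card_mod_four_eq_one hq
  have hzero (b : F) :
      ∑ y, ψ (-0 * y ^ 2 - b * y) = if b = 0 then (Fintype.card F : R) else 0 := by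
    have hlin (y : F) : -0 * y ^ 2 - b * y = y * -b := by ring
    simp only [hlin, sum_mulShift _ hψ, neg_eq_zero, Nat.cast_ite, Nat.cast_zero]
  have hnonzero {s : F} (hs : s ≠ 0) :
      (∑ y, ψ (-s * y ^ 2 - m.1 * y)) * (∑ y, ψ (-s * y ^ 2 - m.2 * y)) * ψ (s * t)
        = Fintype.card F * ψ ((m.1 ^ 2 + m.2 ^ 2) / (4 * s) + s * t) := by
    have hs' : -s ≠ 0 := neg_ne_zero.mpr hs
    rw [sum_addChar_mul_sq_sub_mul hF hψ hs', sum_addChar_mul_sq_sub_mul hF hψ hs']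
    calc _ = η (-s) * η (-s) * gaussSum η ψ ^ 2 *
              ψ (-(m.1 ^ 2 / (4 * -s)) + -(m.2 ^ 2 / (4 * -s)) + s * t) := by
          simp only [map_add_eq_mul]
          ring
      _ = _ := by
          rw [← map_mul, ← sq, ringHomComp_apply, quadraticChar_sq_one' hs', map_one, one_mul,
            gaussSum_quadraticCharIn_sq_of_card_mod_four_eq_one hq hR hψ]
          congr 2
          simp only [mul_neg, div_neg, neg_neg]
          ring
  rw [card_mul_sum_circle_eq_sum_mul_sum hψ, sum_eq_add_sum_sdiff_singleton_of_mem (mem_univ 0),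
    hzero, hzero, mul_sum, sum_congr rfl fun s hs ↦ hnonzero (by simpa using hs)]
  simp only [zero_mul, map_zero_eq_one, mul_one, Prod.ext_iff]
  split_ifs <;> simp_all [sq]

end

theorem circle_fourier_formula_general (F : Type*) [Field F] [Fintype F] [DecidableEq F]
    (hq : Fintype.card F % 4 = 1)
    (χ : AddChar F ℂ) (hχ : χ ≠ 1) (t : F) (m : F × F) :
    ((Fintype.card F : ℂ) ^ 2)⁻¹ *
        ∑ x : F × F, (if x.1 ^ 2 + x.2 ^ 2 = t then χ (-(m.1 * x.1 + m.2 * x.2)) else 0)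
      = (Fintype.card F : ℂ)⁻¹ * (if m = (0, 0) then 1 else 0) +
        ((Fintype.card F : ℂ) ^ 2)⁻¹ *
          ∑ s ∈ Finset.univ \ {(0 : F)}, χ ((m.1 ^ 2 + m.2 ^ 2) / (4 * s) + s * t) := by
  have h := card_mul_sum_circle_eq hq (by simp [ringChar.eq_zero]) (.of_ne_one hχ) t m
  have hcard : (Fintype.card F : ℂ) ≠ 0 := Nat.cast_ne_zero.mpr Fintype.card_ne_zero
  set S := ∑ x : F × F, (if x.1 ^ 2 + x.2 ^ 2 = t then χ (-(m.1 * x.1 + m.2 * x.2)) else 0)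
  set T := ∑ s ∈ Finset.univ \ {(0 : F)}, χ ((m.1 ^ 2 + m.2 ^ 2) / (4 * s) + s * t)
  field_simp
  exact mul_left_cancel₀ hcard (h.trans (by ring))

/-- Explicit formula for the Fourier transform of the circle `V_t = {‖x‖₂ = t}` in `F_q²`
when `q ≡ 1 (mod 4)`:
`V̂_t(m) = q⁻¹δ₀(m) + q⁻² ∑_{s ≠ 0} χ(‖m‖₂/(4s) + st)`. -/
theorem circle_fourier_formula (F : Type*) [Field F] [Fintype F] [DecidableEq F]
    (hodd : Odd (Fintype.card F)) (hq : Fintype.card F % 4 = 1)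
    (χ : AddChar F ℂ) (hχ : χ ≠ 1) (t : F) (m : F × F) :
    ((Fintype.card F : ℂ) ^ 2)⁻¹ *
        ∑ x : F × F, (if x.1 ^ 2 + x.2 ^ 2 = t then χ (-(m.1 * x.1 + m.2 * x.2)) else 0)
      = (Fintype.card F : ℂ)⁻¹ * (if m = (0, 0) then 1 else 0) +
        ((Fintype.card F : ℂ) ^ 2)⁻¹ *
          ∑ s ∈ Finset.univ \ {(0 : F)}, χ ((m.1 ^ 2 + m.2 ^ 2) / (4 * s) + s * t) :=
  circle_fourier_formula_general F hq χ hχ t m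
end

section
/- Let q be an odd prime power, χ a canonical additive character of F_q, and for t ∈ F_q let V_t = {x ∈ F_q² : x₁²+x₂² = t} with Fourier transform V̂_t(m) = q^{-2}∑_{x∈F_q²}χ(-m·x)1_{V_t}(x). Then for all m, ξ ∈ F_q² \ {(0,0)}: ∑_{t ∈ F_q} V̂_t(m)·V̂_t(ξ) = q^{-3} ∑_{s ∈ F_q \ {0}} χ( s(‖m‖₂ − ‖ξ‖₂) ), where ‖x‖₂ = x₁² + x₂². -/
/-!
The indicator of `‖x‖₂ = ‖y‖₂` is `q⁻¹ ∑_s χ(s (‖x‖₂ - ‖y‖₂))`, so the left-hand side equals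
`q⁻⁵ ∑_s E(s, m) E(-s, ξ)` with `E(s, v) = ∑_x χ(s ‖x‖₂ - v·x)`. The term `s = 0` vanishes since
`∑_x χ(-m·x) = 0`. For `s ≠ 0`, completing the square gives `E(s, v) = χ(-‖v‖₂ / 4s) G(s)²` with
`G(s) = ∑_u χ(s u²)`, and `G(s) G(-s) = q`; hence `E(s, m) E(-s, ξ) = q² χ((‖ξ‖₂ - ‖m‖₂) / 4s)`,
and the substitution `s ↦ -1 / 4s` finishes the computation.
-/

open Finset

namespace AddChar

theorem sum_prod_apply_add {A R α β : Type*} [AddMonoid A] [CommSemiring R] [Fintype α]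
    [Fintype β] (ψ : AddChar A R) (f : α → A) (g : β → A) :
    ∑ x : α × β, ψ (f x.1 + g x.2) = (∑ a, ψ (f a)) * ∑ b, ψ (g b) := by
  simp_rw [Fintype.sum_mul_sum, Fintype.sum_prod_type, map_add_eq_mul]

variable {F R : Type*} [Field F] [Fintype F] [CommRing R]

theorem sum_apply_mul_sq_add_mul (ψ : AddChar F R) (h2 : (2 : F) ≠ 0) {s : F} (hs : s ≠ 0)
    (b : F) : ∑ x, ψ (s * x ^ 2 + b * x) = ψ (-b ^ 2 / (4 * s)) * ∑ x, ψ (s * x ^ 2) := by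
  have h4 : (4 : F) ≠ 0 := (by norm_num : (2 : F) ^ 2 = 4) ▸ pow_ne_zero 2 h2
  rw [mul_sum]
  refine Fintype.sum_equiv (Equiv.addRight (b / (2 * s))) _ _ fun x => ?_
  rw [Equiv.coe_addRight, ← map_add_eq_mul]
  congr 1
  field_simp
  ring

variable [IsDomain R] [DecidableEq F]

theorem sum_apply_mul_sq_mul_sum_apply_neg_mul_sq {ψ : AddChar F R} (hψ : ψ ≠ 1)
    (h2 : (2 : F) ≠ 0) {s : F} (hs : s ≠ 0) :
    (∑ x, ψ (s * x ^ 2)) * ∑ x, ψ (-s * x ^ 2) = Fintype.card F := by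
  -- `s u² - s v² = s (u + v) (u - v)`, and `(u, v) ↦ (u + v, u - v)` is a bijection since `2 ≠ 0`.
  let e : F × F ≃ F × F :=
    { toFun p := (p.1 + p.2, p.1 - p.2)
      invFun p := ((p.1 + p.2) / 2, (p.1 - p.2) / 2)
      left_inv p := by ext <;> field_simp <;> ring
      right_inv p := by ext <;> field_simp <;> ring }
  calc (∑ x, ψ (s * x ^ 2)) * ∑ x, ψ (-s * x ^ 2)
      = ∑ p : F × F, ψ (s * p.1 ^ 2 + -s * p.2 ^ 2) := (sum_prod_apply_add ψ _ _).symm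
    _ = ∑ p : F × F, ψ (p.1 * (s * p.2)) :=
        Fintype.sum_equiv e _ _ fun p => by simp only [e, Equiv.coe_fn_mk]; ring_nf
    _ = ∑ a : F, ∑ b : F, ψ (b * (s * a)) := by
        rw [Fintype.sum_prod_type_right]
    _ = Fintype.card F := by
        simp_rw [sum_mulShift _ (IsPrimitive.of_ne_one hψ), mul_eq_zero, hs, false_or]
        simp

theorem card_mul_sum_fiberwise_mul {α : Type*} [Fintype α] {ψ : AddChar F R} (hψ : ψ ≠ 1)
    (Q : α → F) (f g : α → R) :
    (Fintype.card F : R) *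
        ∑ t, (∑ x, if Q x = t then f x else 0) * (∑ y, if Q y = t then g y else 0)
      = ∑ s, (∑ x, ψ (s * Q x) * f x) * ∑ y, ψ (-s * Q y) * g y := by
  have fiber : ∑ t, (∑ x, if Q x = t then f x else 0) * (∑ y, if Q y = t then g y else 0)
      = ∑ x, ∑ y, if Q x = Q y then f x * g y else 0 := by
    simp_rw [sum_mul_sum]
    rw [sum_comm]
    refine sum_congr rfl fun x _ => ?_
    rw [sum_comm]
    simp only [ite_mul, mul_ite, zero_mul, mul_zero, sum_ite_eq, mem_univ, if_true]
  have orth (x y : α) : (if Q x = Q y then (Fintype.card F : R) else 0)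
      = ∑ s, ψ (s * Q x) * ψ (-s * Q y) := by
    have := sum_mulShift (Q x - Q y) (IsPrimitive.of_ne_one hψ)
    simp only [sub_eq_zero, Nat.cast_ite, Nat.cast_zero] at this
    rw [← this]
    refine sum_congr rfl fun s _ => ?_
    rw [← map_add_eq_mul]
    ring_nf
  calc (Fintype.card F : R) *
        ∑ t, (∑ x, if Q x = t then f x else 0) * (∑ y, if Q y = t then g y else 0)
      = ∑ x, ∑ y, (if Q x = Q y then (Fintype.card F : R) else 0) * (f x * g y) := by
        rw [fiber]
        simp only [mul_sum, mul_ite, ite_mul, mul_zero, zero_mul]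
    _ = ∑ s, (∑ x, ψ (s * Q x) * f x) * ∑ y, ψ (-s * Q y) * g y := by
        simp_rw [orth, sum_mul_sum, sum_mul]
        conv_lhs => enter [2, x]; rw [sum_comm]
        rw [sum_comm]
        exact sum_congr rfl fun _ _ => sum_congr rfl fun _ _ => sum_congr rfl fun _ _ => by ring

end AddChar

theorem Finset.sum_sdiff_zero_comp_inv_mul {F M : Type*} [Field F] [Fintype F] [DecidableEq F]
    [AddCommMonoid M] {c : F} (hc : c ≠ 0) (f : F → M) :
    ∑ s ∈ univ \ {0}, f (c * s)⁻¹ = ∑ s ∈ univ \ {0}, f s := by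
  refine sum_nbij' (fun s => (c * s)⁻¹) (fun s => (c * s)⁻¹) ?_ ?_ ?_ ?_ fun _ _ => rfl <;>
    intro s hs <;> simp_all [mul_comm]

namespace Plane

variable {F R : Type*} [Field F] [Fintype F] [CommRing R]

def sqNorm (x : F × F) : F := x.1 ^ 2 + x.2 ^ 2

def dot (v x : F × F) : F := v.1 * x.1 + v.2 * x.2

theorem sum_apply_neg_dot_eq_zero [IsDomain R] [DecidableEq F] {ψ : AddChar F R} (hψ : ψ ≠ 1)
    {v : F × F} (hv : v ≠ 0) : ∑ x, ψ (-dot v x) = 0 := by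
  have split (x : F × F) : -dot v x = x.1 * -v.1 + x.2 * -v.2 := by simp only [dot]; ring
  simp_rw [split]
  rw [AddChar.sum_prod_apply_add ψ (· * -v.1) (· * -v.2)]
  simp_rw [AddChar.sum_mulShift _ (AddChar.IsPrimitive.of_ne_one hψ), neg_eq_zero]
  obtain h | h : v.1 ≠ 0 ∨ v.2 ≠ 0 := by simpa [Prod.ext_iff, or_iff_not_imp_left] using hv
  all_goals simp [h]

theorem sum_apply_mul_sqNorm_sub_dot (ψ : AddChar F R) (h2 : (2 : F) ≠ 0) {s : F} (hs : s ≠ 0)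
    (v : F × F) :
    ∑ x, ψ (s * sqNorm x - dot v x) = ψ (-sqNorm v / (4 * s)) * (∑ u, ψ (s * u ^ 2)) ^ 2 := by
  have split (x : F × F) :
      s * sqNorm x - dot v x = (s * x.1 ^ 2 + -v.1 * x.1) + (s * x.2 ^ 2 + -v.2 * x.2) := by
    simp only [sqNorm, dot]; ring
  simp_rw [split]
  rw [AddChar.sum_prod_apply_add ψ (fun a => s * a ^ 2 + -v.1 * a)
    (fun b => s * b ^ 2 + -v.2 * b)]
  simp_rw [AddChar.sum_apply_mul_sq_add_mul ψ h2 hs]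
  rw [mul_mul_mul_comm, ← AddChar.map_add_eq_mul, sq (∑ u, ψ (s * u ^ 2))]
  congr 2
  simp only [sqNorm]
  ring

theorem sum_apply_sqNorm_sub_dot_mul_sum [IsDomain R] [DecidableEq F] {ψ : AddChar F R}
    (hψ : ψ ≠ 1) (h2 : (2 : F) ≠ 0) {s : F} (hs : s ≠ 0) (v w : F × F) :
    (∑ x, ψ (s * sqNorm x - dot v x)) * ∑ x, ψ (-s * sqNorm x - dot w x)
      = Fintype.card F ^ 2 * ψ ((-4 * s)⁻¹ * (sqNorm v - sqNorm w)) := by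
  have h4 : (4 : F) ≠ 0 := (by norm_num : (2 : F) ^ 2 = 4) ▸ pow_ne_zero 2 h2
  rw [sum_apply_mul_sqNorm_sub_dot ψ h2 hs, sum_apply_mul_sqNorm_sub_dot ψ h2 (neg_ne_zero.2 hs),
    mul_mul_mul_comm, ← mul_pow, AddChar.sum_apply_mul_sq_mul_sum_apply_neg_mul_sq hψ h2 hs,
    ← AddChar.map_add_eq_mul, mul_comm]
  congr 2
  field_simp
  ring

theorem card_mul_sum_circle_mul_circle [IsDomain R] [DecidableEq F] {ψ : AddChar F R}
    (hψ : ψ ≠ 1) (h2 : (2 : F) ≠ 0) {v : F × F} (hv : v ≠ 0) (w : F × F) :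
    (Fintype.card F : R) * ∑ t, (∑ x, if sqNorm x = t then ψ (-dot v x) else 0) *
        (∑ x, if sqNorm x = t then ψ (-dot w x) else 0)
      = Fintype.card F ^ 2 * ∑ s ∈ univ \ {0}, ψ (s * (sqNorm v - sqNorm w)) := by
  have h4 : (-4 : F) ≠ 0 := neg_ne_zero.2 <| (by norm_num : (2 : F) ^ 2 = 4) ▸ pow_ne_zero 2 h2
  rw [AddChar.card_mul_sum_fiberwise_mul hψ sqNorm]
  simp_rw [← AddChar.map_add_eq_mul, ← sub_eq_add_neg]
  rw [← sum_subset (subset_univ (univ \ {0})) fun s _ hs => by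
      simp [show s = 0 by simpa using hs, sum_apply_neg_dot_eq_zero hψ hv],
    sum_congr rfl fun s hs => sum_apply_sqNorm_sub_dot_mul_sum hψ h2 (by simpa using hs) v w,
    ← mul_sum, sum_sdiff_zero_comp_inv_mul h4 fun s => ψ (s * (sqNorm v - sqNorm w))]

end Plane

open Plane in
theorem circle_double_fourier_decay_general (F : Type*) [Field F] [Fintype F] [DecidableEq F]
    (hodd : Odd (Fintype.card F)) (χ : AddChar F ℂ) (hχ : χ ≠ 1)
    (m ξ : F × F) (hm : m ≠ (0, 0)) :
    ∑ t : F,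
        (((Fintype.card F : ℂ) ^ 2)⁻¹ *
          ∑ x : F × F, (if x.1 ^ 2 + x.2 ^ 2 = t then χ (-(m.1 * x.1 + m.2 * x.2)) else 0)) *
        (((Fintype.card F : ℂ) ^ 2)⁻¹ *
          ∑ x : F × F, (if x.1 ^ 2 + x.2 ^ 2 = t then χ (-(ξ.1 * x.1 + ξ.2 * x.2)) else 0))
      = ((Fintype.card F : ℂ) ^ 3)⁻¹ *
          ∑ s ∈ Finset.univ \ {(0 : F)}, χ (s * ((m.1 ^ 2 + m.2 ^ 2) - (ξ.1 ^ 2 + ξ.2 ^ 2))) := by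
  have h2 : (2 : F) ≠ 0 := Ring.two_ne_zero fun h => by
    simp [Nat.odd_iff, FiniteField.even_card_of_char_two h] at hodd
  have hq : (Fintype.card F : ℂ) ≠ 0 := Nat.cast_ne_zero.2 Fintype.card_ne_zero
  change ∑ t, (_ * ∑ x, if sqNorm x = t then χ (-dot m x) else 0) *
    (_ * ∑ x, if sqNorm x = t then χ (-dot ξ x) else 0) =
    _ * ∑ s ∈ univ \ {0}, χ (s * (sqNorm m - sqNorm ξ))
  simp_rw [mul_mul_mul_comm _ (∑ x : F × F, _), ← mul_sum]
  rw [← mul_right_inj' hq, mul_left_comm,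
    card_mul_sum_circle_mul_circle hχ h2 hm ξ, ← mul_assoc, ← mul_assoc]
  congr 1
  field_simp

/-- For circles `V_t = {‖x‖₂ = t}` in `F_q²` (`q` odd) and `m, ξ ≠ (0,0)`:
`∑_t V̂_t(m)·V̂_t(ξ) = q⁻³ ∑_{s ≠ 0} χ(s(‖m‖₂ − ‖ξ‖₂))`. -/
theorem circle_double_fourier_decay (F : Type*) [Field F] [Fintype F] [DecidableEq F]
    (hodd : Odd (Fintype.card F)) (χ : AddChar F ℂ) (hχ : χ ≠ 1)
    (m ξ : F × F) (hm : m ≠ (0, 0)) (hξ : ξ ≠ (0, 0)) :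
    ∑ t : F,
        (((Fintype.card F : ℂ) ^ 2)⁻¹ *
          ∑ x : F × F, (if x.1 ^ 2 + x.2 ^ 2 = t then χ (-(m.1 * x.1 + m.2 * x.2)) else 0)) *
        (((Fintype.card F : ℂ) ^ 2)⁻¹ *
          ∑ x : F × F, (if x.1 ^ 2 + x.2 ^ 2 = t then χ (-(ξ.1 * x.1 + ξ.2 * x.2)) else 0))
      = ((Fintype.card F : ℂ) ^ 3)⁻¹ *
          ∑ s ∈ Finset.univ \ {(0 : F)}, χ (s * ((m.1 ^ 2 + m.2 ^ 2) - (ξ.1 ^ 2 + ξ.2 ^ 2))) :=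
  circle_double_fourier_decay_general F hodd χ hχ m ξ hm
end

section
/- Let q ≡ 1 (mod 4) be an odd prime power and E, F ⊆ F_q² with |E||F| ≳ q². Let ν(0) = |{(x,y) ∈ E×F : ‖x−y‖₂ = 0}| where ‖x‖₂ = x₁²+x₂². Then ν(0) = O(q^{-1}|E||F|) + q³ ∑_{m ∈ V₀} conj(Ê(m))·F̂(m), where V₀ = {m ∈ F_q² : ‖m‖₂ = 0} and Ê(m) = q^{-2}∑_{x∈E}χ(-x·m). -/
/-!
Let `i² = -1`. The circle of radius zero `V₀` is the union of the isotropic lines `x₁ = ± i x₂`,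
which meet only at the origin, and each of them is its own orthogonal complement. Hence
`∑_{m ∈ V₀} χ(z · m) = q 1_{V₀}(z) + q δ₀(z) - 1`, and expanding `q³ ∑_{m ∈ V₀} conj(Ê m) F̂ m`
with this formula gives exactly `ν(0) + |E ∩ F| - q⁻¹ |E| |F|`. Finally
`|E ∩ F| ≤ √(|E| |F|) ≤ |E| |F| / (√c q)`.
-/

open Finset

theorem mul_fst_add_snd_eq_zero_iff {R : Type*} [CommRing R] {j : R} (hj : j * j = -1)
    (z : R × R) : j * z.1 + z.2 = 0 ↔ z.1 = j * z.2 := by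
  constructor
  · intro h
    linear_combination (-j) * h + z.1 * hj
  · intro h
    linear_combination j * h + z.2 * hj

section IsotropicLines

variable {K : Type*} [Field K] [Fintype K] [DecidableEq K]

def isotropicLine (j : K) : Finset (K × K) := univ.filter fun m => m.1 = j * m.2

/-- An isotropic line is its own orthogonal complement, so its character sums detect it. -/
theorem sum_addChar_isotropicLine {χ : AddChar K ℂ} (hχ : χ ≠ 1) {j : K} (hj : j * j = -1)
    (z : K × K) :
    ∑ m ∈ isotropicLine j, χ (z.1 * m.1 + z.2 * m.2)
      = if z ∈ isotropicLine j then (Fintype.card K : ℂ) else 0 := by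
  have hline : ∑ m ∈ isotropicLine j, χ (z.1 * m.1 + z.2 * m.2)
      = ∑ t : K, χ (t * (j * z.1 + z.2)) := by
    rw [isotropicLine, sum_filter, Fintype.sum_prod_type_right]
    refine Fintype.sum_congr _ _ fun t => ?_
    simp only [sum_ite_eq', mem_univ, if_true]
    congr 1
    ring
  rw [hline, AddChar.sum_mulShift _ (AddChar.IsPrimitive.of_ne_one hχ)]
  simp only [mul_fst_add_snd_eq_zero_iff hj, isotropicLine, mem_filter, mem_univ, true_and]
  push_cast
  rfl

theorem filter_sq_add_sq_eq_zero {i : K} (hi : i * i = -1) :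
    univ.filter (fun m : K × K => m.1 ^ 2 + m.2 ^ 2 = 0)
      = isotropicLine i ∪ isotropicLine (-i) := by
  ext m
  simp only [isotropicLine, mem_union, mem_filter, mem_univ, true_and]
  constructor
  · intro h
    have : (m.1 - i * m.2) * (m.1 + i * m.2) = 0 := by linear_combination h - m.2 ^ 2 * hi
    rcases mul_eq_zero.mp this with h' | h'
    · exact Or.inl (by linear_combination h')
    · exact Or.inr (by linear_combination h')
  · rintro (h | h) <;> rw [h] <;> linear_combination m.2 ^ 2 * hi

theorem isotropicLine_inter_neg {i : K} (hi : i * i = -1) (h2 : (2 : K) ≠ 0) :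
    isotropicLine i ∩ isotropicLine (-i) = {0} := by
  have hi0 : i ≠ 0 := by
    rintro rfl
    simp at hi
  ext m
  simp only [isotropicLine, mem_inter, mem_filter, mem_univ, true_and, mem_singleton]
  constructor
  · rintro ⟨h, h'⟩
    have h₂ : m.2 = 0 := by
      have : (2 * i) * m.2 = 0 := by linear_combination h' - h
      exact (mul_eq_zero.mp this).resolve_left (mul_ne_zero h2 hi0)
    exact Prod.ext (by simp [h, h₂]) h₂
  · rintro rfl
    simp

/-- The circle of radius zero is the union of two isotropic lines meeting at the origin. -/
theorem sum_addChar_sq_add_sq_eq_zero {χ : AddChar K ℂ} (hχ : χ ≠ 1) {i : K} (hi : i * i = -1)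
    (h2 : (2 : K) ≠ 0) (z : K × K) :
    ∑ m ∈ univ.filter (fun m : K × K => m.1 ^ 2 + m.2 ^ 2 = 0), χ (z.1 * m.1 + z.2 * m.2)
      = (if z.1 ^ 2 + z.2 ^ 2 = 0 then (Fintype.card K : ℂ) else 0)
        + (if z = 0 then (Fintype.card K : ℂ) else 0) - 1 := by
  have hunion := sum_union_inter (s₁ := isotropicLine i) (s₂ := isotropicLine (-i))
    (f := fun m => χ (z.1 * m.1 + z.2 * m.2))
  have hneg : (-i) * (-i) = -1 := by rw [neg_mul_neg, hi]
  rw [isotropicLine_inter_neg hi h2, sum_singleton, sum_addChar_isotropicLine hχ hi,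
    sum_addChar_isotropicLine hχ hneg] at hunion
  have hmem : z.1 ^ 2 + z.2 ^ 2 = 0 ↔ z ∈ isotropicLine i ∪ isotropicLine (-i) := by
    rw [← filter_sq_add_sq_eq_zero hi, mem_filter]
    simp only [mem_univ, true_and]
  have hzero : z = 0 ↔ z ∈ isotropicLine i ∩ isotropicLine (-i) := by
    rw [isotropicLine_inter_neg hi h2, mem_singleton]
  rw [filter_sq_add_sq_eq_zero hi]
  simp only [hmem, hzero]
  simp only [Prod.fst_zero, Prod.snd_zero, mul_zero, add_zero, AddChar.map_zero_eq_one] at hunion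
  by_cases hA : z ∈ isotropicLine i <;> by_cases hB : z ∈ isotropicLine (-i) <;>
    simp only [mem_union, mem_inter, hA, hB, if_true, if_false, or_true, and_true, and_false,
      or_false] at hunion ⊢ <;>
    linear_combination hunion

end IsotropicLines

section FourierCoefficients

variable {K : Type*} [CommRing K] [Fintype K]

noncomputable def indicatorFourier (χ : AddChar K ℂ) (E : Finset (K × K)) (m : K × K) : ℂ :=
  ((Fintype.card K : ℂ) ^ 2)⁻¹ * ∑ x ∈ E, χ (-(x.1 * m.1 + x.2 * m.2))

theorem conj_indicatorFourier_mul_indicatorFourier (χ : AddChar K ℂ) (E F : Finset (K × K))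
    (m : K × K) :
    starRingEnd ℂ (indicatorFourier χ E m) * indicatorFourier χ F m
      = ((Fintype.card K : ℂ) ^ 4)⁻¹
        * ∑ x ∈ E, ∑ y ∈ F, χ ((x.1 - y.1) * m.1 + (x.2 - y.2) * m.2) := by
  simp only [indicatorFourier, map_mul, map_inv₀, map_pow, Complex.conj_natCast, map_sum,
    ← AddChar.map_neg_eq_conj, neg_neg]
  rw [mul_mul_mul_comm, sum_mul_sum, ← mul_inv, ← pow_add]
  congr 1
  refine sum_congr rfl fun x _ => sum_congr rfl fun y _ => ?_
  rw [← AddChar.map_add_eq_mul]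
  ring_nf

theorem sum_conj_indicatorFourier_mul_indicatorFourier (χ : AddChar K ℂ)
    (E F S : Finset (K × K)) :
    ∑ m ∈ S, starRingEnd ℂ (indicatorFourier χ E m) * indicatorFourier χ F m
      = ((Fintype.card K : ℂ) ^ 4)⁻¹
        * ∑ x ∈ E, ∑ y ∈ F, ∑ m ∈ S, χ ((x.1 - y.1) * m.1 + (x.2 - y.2) * m.2) := by
  simp_rw [conj_indicatorFourier_mul_indicatorFourier, ← mul_sum]
  rw [sum_comm]
  simp_rw [sum_comm (s := S)]

end FourierCoefficients

section ZeroDistance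

variable {K : Type*} [Field K] [Fintype K] [DecidableEq K]

theorem card_zero_distance_sub_fourier_sum_eq (hK : Fintype.card K % 4 = 1) {χ : AddChar K ℂ}
    (hχ : χ ≠ 1) (E F : Finset (K × K)) :
    ((((E ×ˢ F).filter (fun p : (K × K) × (K × K) =>
          (p.1.1 - p.2.1) ^ 2 + (p.1.2 - p.2.2) ^ 2 = 0)).card : ℂ)
        - (Fintype.card K : ℂ) ^ 3
          * ∑ m ∈ univ.filter (fun m : K × K => m.1 ^ 2 + m.2 ^ 2 = 0),
              starRingEnd ℂ (indicatorFourier χ E m) * indicatorFourier χ F m)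
      = (Fintype.card K : ℂ)⁻¹ * E.card * F.card - (E ∩ F).card := by
  set q : ℂ := (Fintype.card K : ℂ) with hq_def
  obtain ⟨i, hi⟩ := (FiniteField.isSquare_neg_one_iff (F := K)).mpr (by omega)
  have h2 : (2 : K) ≠ 0 := Ring.two_ne_zero fun h => by
    have := FiniteField.even_card_iff_char_two.mp h
    omega
  have hq : q ≠ 0 := Nat.cast_ne_zero.mpr Fintype.card_ne_zero
  have hsphere : ∀ x y : K × K,
      ∑ m ∈ univ.filter (fun m : K × K => m.1 ^ 2 + m.2 ^ 2 = 0),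
          χ ((x.1 - y.1) * m.1 + (x.2 - y.2) * m.2)
        = (if (x.1 - y.1) ^ 2 + (x.2 - y.2) ^ 2 = 0 then q else 0)
          + (if x = y then q else 0) - 1 := fun x y => by
    simpa [sub_eq_zero] using sum_addChar_sq_add_sq_eq_zero hχ hi.symm h2 (x - y)
  have hcount : (((E ×ˢ F).filter (fun p : (K × K) × (K × K) =>
        (p.1.1 - p.2.1) ^ 2 + (p.1.2 - p.2.2) ^ 2 = 0)).card : ℂ)
      = ∑ x ∈ E, ∑ y ∈ F, if (x.1 - y.1) ^ 2 + (x.2 - y.2) ^ 2 = 0 then 1 else 0 := by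
    simp only [card_filter, sum_product, Nat.cast_sum, Nat.cast_ite, Nat.cast_one, Nat.cast_zero]
  have hfourier : q ^ 3 * ∑ m ∈ univ.filter (fun m : K × K => m.1 ^ 2 + m.2 ^ 2 = 0),
        starRingEnd ℂ (indicatorFourier χ E m) * indicatorFourier χ F m
      = ∑ x ∈ E, ∑ y ∈ F, q⁻¹ * ((if (x.1 - y.1) ^ 2 + (x.2 - y.2) ^ 2 = 0 then q else 0)
          + (if x = y then q else 0) - 1) := by
    rw [sum_conj_indicatorFourier_mul_indicatorFourier, ← hq_def, ← mul_assoc,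
      show q ^ 3 * (q ^ 4)⁻¹ = q⁻¹ by field_simp]
    simp_rw [hsphere, mul_sum]
  have hpoint : ∀ x y : K × K,
      (if (x.1 - y.1) ^ 2 + (x.2 - y.2) ^ 2 = 0 then 1 else 0)
        - q⁻¹ * ((if (x.1 - y.1) ^ 2 + (x.2 - y.2) ^ 2 = 0 then q else 0)
          + (if x = y then q else 0) - 1)
      = q⁻¹ - if x = y then 1 else 0 := by
    intro x y
    split_ifs <;> field_simp <;> ring
  rw [hcount, hfourier]
  simp only [← sum_sub_distrib, hpoint]
  simp only [sum_sub_distrib, sum_const, nsmul_eq_mul, sum_ite_eq, sum_boole, filter_mem_eq_inter]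
  ring

end ZeroDistance

theorem abs_inv_mul_sub_le {a b c k q : ℝ} (hc : 0 < c) (hq : 0 < q) (hk : 0 ≤ k)
    (hka : k ≤ a) (hkb : k ≤ b) (hab : c * q ^ 2 ≤ a * b) :
    |q⁻¹ * a * b - k| ≤ (1 + (√c)⁻¹) * q⁻¹ * (a * b) := by
  have hab₀ : 0 ≤ a * b := mul_nonneg (hk.trans hka) (hk.trans hkb)
  -- both `k` and `√c q` are at most `√(ab)`
  have hkq : √c * q * k ≤ a * b := by
    refine (pow_le_pow_iff_left₀ (by positivity) hab₀ two_ne_zero).mp ?_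
    calc (√c * q * k) ^ 2 = c * q ^ 2 * k ^ 2 := by rw [mul_pow, mul_pow, Real.sq_sqrt hc.le]
      _ ≤ (a * b) * (a * b) := mul_le_mul hab (by nlinarith) (sq_nonneg _) hab₀
      _ = (a * b) ^ 2 := (sq _).symm
  have hk_le : k ≤ (√c)⁻¹ * q⁻¹ * (a * b) := by
    rw [← mul_inv, ← div_eq_inv_mul, le_div_iff₀ (by positivity)]
    linarith
  have hdensity_nonneg : 0 ≤ q⁻¹ * a * b := by rw [mul_assoc]; positivity
  rw [abs_le]
  constructor <;> linarith

/-- For `q ≡ 1 (mod 4)` and `E, F ⊆ F_q²` with `|E||F| ≳ q²`, the number `ν(0)` of pairs at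
distance zero satisfies `ν(0) = O(q⁻¹|E||F|) + q³ ∑_{m ∈ V₀} conj(Ê(m))·F̂(m)`. -/
theorem zero_distance_count (c : ℝ) (hc : 0 < c) :
    ∃ C : ℝ, ∀ (F : Type) [Field F] [Fintype F] [DecidableEq F],
      Fintype.card F % 4 = 1 → Odd (Fintype.card F) →
      ∀ χ : AddChar F ℂ, χ ≠ 1 →
      ∀ E F' : Finset (F × F),
        c * (Fintype.card F : ℝ) ^ 2 ≤ (E.card : ℝ) * F'.card →
        ∀ Ehat Fhat : F × F → ℂ,
          (∀ m : F × F,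
            Ehat m = ((Fintype.card F : ℂ) ^ 2)⁻¹ * ∑ x ∈ E, χ (-(x.1 * m.1 + x.2 * m.2))) →
          (∀ m : F × F,
            Fhat m = ((Fintype.card F : ℂ) ^ 2)⁻¹ * ∑ y ∈ F', χ (-(y.1 * m.1 + y.2 * m.2))) →
          ‖((((E ×ˢ F').filter
                (fun p : (F × F) × (F × F) =>
                  (p.1.1 - p.2.1) ^ 2 + (p.1.2 - p.2.2) ^ 2 = 0)).card : ℂ) -
              (Fintype.card F : ℂ) ^ 3 *
                (∑ m ∈ Finset.univ.filter (fun m : F × F => m.1 ^ 2 + m.2 ^ 2 = 0),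
                  (starRingEnd ℂ) (Ehat m) * Fhat m))‖
            ≤ C * (Fintype.card F : ℝ)⁻¹ * ((E.card : ℝ) * F'.card) := by
  refine ⟨1 + (√c)⁻¹, fun K _ _ _ hK _ χ hχ E F hcard Ehat Fhat hE hF => ?_⟩
  obtain rfl : Ehat = indicatorFourier χ E := funext hE
  obtain rfl : Fhat = indicatorFourier χ F := funext hF
  have hreal : (Fintype.card K : ℂ)⁻¹ * E.card * F.card - (E ∩ F).card
      = (((Fintype.card K : ℝ)⁻¹ * E.card * F.card - (E ∩ F).card : ℝ) : ℂ) := by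
    push_cast
    ring
  rw [card_zero_distance_sub_fourier_sum_eq hK hχ E F, hreal, Complex.norm_real, Real.norm_eq_abs]
  exact abs_inv_mul_sub_le hc (by simp [Fintype.card_pos]) (Nat.cast_nonneg _)
    (mod_cast card_le_card inter_subset_left) (mod_cast card_le_card inter_subset_right) hcard
end
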